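/- The map sending a positive integer n with Zeckendorf representation n = sum_{i=2}^{r} a_i F_i (with a_i a_{i+1} = 0) to fib(n) = sum_{i=2}^{r} a_i 2^{i-2} is a bijection from the positive natural numbers onto the set of fibbinary numbers (positive integers whose binary representations have no two consecutive 1s). -/

import Mathlib

/-!
A positive integer and a positive fibbinary number are both encoded by a nonempty finite set of
pairwise non-adjacent indices: its Zeckendorf indices (all `≥ 2`, unique by Zeckendorf's theorem
`Nat.zeckendorf_sum_fib`), resp. its bit positions. Shifting the indices by `2` matches the two
encodings, so `m ↦ ∑ fib (j + 2)` over the bits `j` of `m` inverts the map on fibbinary numbers;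
both maps fix `0`, hence restrict to the positive numbers.
-/

/-- A natural number is fibbinary if its binary representation has no two consecutive 1 bits. -/
def Fibbinary (m : ℕ) : Prop := ∀ i : ℕ, ¬(m.testBit i ∧ m.testBit (i + 1))

open Nat Finset

theorem fibbinary_sum_two_pow_iff (T : Finset ℕ) :
    Fibbinary (∑ i ∈ T, 2 ^ i) ↔ ∀ i ∈ T, i + 1 ∉ T := by
  simp only [Fibbinary, ← Nat.mem_bitIndices, ← List.mem_toFinset,
    Finset.toFinset_bitIndices_sum_two_pow, not_and]

namespace List.IsZeckendorfRep

variable {l : List ℕ}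

theorem pairwise (h : l.IsZeckendorfRep) : (l ++ [0]).Pairwise (fun a b ↦ b + 2 ≤ a) :=
  letI : Trans (fun a b : ℕ ↦ b + 2 ≤ a) (fun a b ↦ b + 2 ≤ a) (fun a b ↦ b + 2 ≤ a) :=
    ⟨fun hab hbc ↦ by omega⟩
  IsChain.pairwise h

theorem two_le_of_mem (h : l.IsZeckendorfRep) {i : ℕ} (hi : i ∈ l) : 2 ≤ i := by
  simpa using (List.pairwise_append.1 h.pairwise).2.2 i hi 0

theorem nodup (h : l.IsZeckendorfRep) : l.Nodup :=
  (List.pairwise_append.1 h.pairwise).1.imp fun hab ↦ by omega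

theorem add_one_notMem (h : l.IsZeckendorfRep) {i : ℕ} (hi : i ∈ l) : i + 1 ∉ l := by
  obtain ⟨hl, -, -⟩ := List.pairwise_append.1 h.pairwise
  clear h
  induction l with
  | nil => simp at hi
  | cons a t ih =>
    simp only [List.pairwise_cons, List.mem_cons] at hl hi ⊢
    grind

end List.IsZeckendorfRep

theorem Finset.isZeckendorfRep_sort {S : Finset ℕ} (h2 : ∀ i ∈ S, 2 ≤ i)
    (hsep : ∀ i ∈ S, i + 1 ∉ S) : (S.sort (· ≥ ·)).IsZeckendorfRep := by
  refine List.Pairwise.isChain (List.pairwise_append.2 ⟨?_, by simp, ?_⟩)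
  · refine (S.sortedGT_sort.pairwise).imp_of_mem fun ha hb hab ↦ ?_
    rw [Finset.mem_sort] at ha hb
    have := hsep _ hb
    grind
  · simpa using fun a ha ↦ h2 a ((Finset.mem_sort (· ≥ ·)).1 ha)

namespace Nat

theorem sum_fib_toFinset_zeckendorf (n : ℕ) : ∑ i ∈ (zeckendorf n).toFinset, fib i = n := by
  rw [List.sum_toFinset _ (isZeckendorfRep_zeckendorf n).nodup, sum_zeckendorf_fib]

theorem toFinset_zeckendorf_sum_fib {S : Finset ℕ} (h2 : ∀ i ∈ S, 2 ≤ i)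
    (hsep : ∀ i ∈ S, i + 1 ∉ S) : (zeckendorf (∑ i ∈ S, fib i)).toFinset = S := by
  have hsum : ∑ i ∈ S, fib i = ((S.sort (· ≥ ·)).map fib).sum := by
    conv_lhs => rw [← S.sort_toFinset (· ≥ ·)]
    exact List.sum_toFinset _ (S.sort_nodup _)
  rw [hsum, zeckendorf_sum_fib (S.isZeckendorfRep_sort h2 hsep), sort_toFinset]

theorem two_le_of_mem_zeckendorf {n i : ℕ} (hi : i ∈ zeckendorf n) : 2 ≤ i :=
  (isZeckendorfRep_zeckendorf n).two_le_of_mem hi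

theorem injOn_sub_two_toFinset_zeckendorf (n : ℕ) :
    Set.InjOn (· - 2) ((zeckendorf n).toFinset : Set ℕ) := fun i hi i' hi' h ↦ by
  have := two_le_of_mem_zeckendorf (List.mem_toFinset.1 hi)
  have := two_le_of_mem_zeckendorf (List.mem_toFinset.1 hi')
  simp only at h
  omega

end Nat

def zeckendorfToBinary (n : ℕ) : ℕ := ∑ i ∈ (zeckendorf n).toFinset, 2 ^ (i - 2)

def binaryToZeckendorf (m : ℕ) : ℕ := ∑ j ∈ m.bitIndices.toFinset, fib (j + 2)

@[simp]
theorem zeckendorfToBinary_zero : zeckendorfToBinary 0 = 0 := by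
  simp [zeckendorfToBinary]

@[simp]
theorem binaryToZeckendorf_zero : binaryToZeckendorf 0 = 0 := by
  simp [binaryToZeckendorf]

theorem zeckendorfToBinary_sum_fib {S : Finset ℕ} (h2 : ∀ i ∈ S, 2 ≤ i)
    (hsep : ∀ i ∈ S, i + 1 ∉ S) : zeckendorfToBinary (∑ i ∈ S, fib i) = ∑ i ∈ S, 2 ^ (i - 2) := by
  rw [zeckendorfToBinary, toFinset_zeckendorf_sum_fib h2 hsep]

theorem zeckendorfToBinary_eq_sum_image (n : ℕ) :
    zeckendorfToBinary n = ∑ j ∈ (zeckendorf n).toFinset.image (· - 2), 2 ^ j :=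
  (sum_image (injOn_sub_two_toFinset_zeckendorf n)).symm

theorem fibbinary_zeckendorfToBinary (n : ℕ) : Fibbinary (zeckendorfToBinary n) := by
  rw [zeckendorfToBinary_eq_sum_image, fibbinary_sum_two_pow_iff]
  simp only [mem_image, List.mem_toFinset, not_exists, not_and]
  rintro _ ⟨i, hi, rfl⟩ i' hi' h
  have := two_le_of_mem_zeckendorf hi
  have := two_le_of_mem_zeckendorf hi'
  exact (isZeckendorfRep_zeckendorf n).add_one_notMem hi (by convert hi' using 1; omega)

theorem binaryToZeckendorf_zeckendorfToBinary (n : ℕ) :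
    binaryToZeckendorf (zeckendorfToBinary n) = n := by
  rw [binaryToZeckendorf, zeckendorfToBinary_eq_sum_image, toFinset_bitIndices_sum_two_pow,
    sum_image (injOn_sub_two_toFinset_zeckendorf n)]
  conv_rhs => rw [← n.sum_fib_toFinset_zeckendorf]
  refine sum_congr rfl fun i hi ↦ ?_
  rw [Nat.sub_add_cancel (two_le_of_mem_zeckendorf (List.mem_toFinset.1 hi))]

theorem zeckendorfToBinary_binaryToZeckendorf {m : ℕ} (hm : Fibbinary m) :
    zeckendorfToBinary (binaryToZeckendorf m) = m := by
  have hS :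
      binaryToZeckendorf m = ∑ i ∈ m.bitIndices.toFinset.map (addRightEmbedding 2), fib i := by
    rw [binaryToZeckendorf, sum_map]; rfl
  rw [hS, zeckendorfToBinary_sum_fib (by simp) ?_, sum_map]
  · simp
  · simp only [mem_map, List.mem_toFinset, mem_bitIndices, addRightEmbedding_apply]
    rintro _ ⟨j, hj, rfl⟩ ⟨j', hj', h⟩
    exact hm j ⟨hj, by convert hj' using 2; omega⟩

/-- The Zeckendorf-to-binary map `n = ∑ a_i F_i ↦ ∑ a_i 2^(i-2)` (with
`F_2 = 1, F_3 = 2, ...`, i.e. `F i = Nat.fib i`) is a bijection from the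
positive integers onto the positive fibbinary numbers. -/
theorem zeckendorf_fibbinary_bijection :
    ∃ f : ℕ → ℕ,
      (∀ (n : ℕ) (S : Finset ℕ), 0 < n → (∀ i ∈ S, 2 ≤ i) → (∀ i ∈ S, i + 1 ∉ S) →
        n = ∑ i ∈ S, Nat.fib i → f n = ∑ i ∈ S, 2 ^ (i - 2)) ∧
      Set.BijOn f {n : ℕ | 0 < n} {m : ℕ | 0 < m ∧ Fibbinary m} := by
  refine ⟨zeckendorfToBinary, fun n S _ h2 hsep hn ↦ hn ▸ zeckendorfToBinary_sum_fib h2 hsep, ?_⟩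
  have hinv : Set.InvOn binaryToZeckendorf zeckendorfToBinary
      {n | 0 < n} {m | 0 < m ∧ Fibbinary m} :=
    ⟨fun n _ ↦ binaryToZeckendorf_zeckendorfToBinary n,
      fun m hm ↦ zeckendorfToBinary_binaryToZeckendorf hm.2⟩
  refine hinv.bijOn (fun n (hn : 0 < n) ↦ ⟨?_, fibbinary_zeckendorfToBinary n⟩) fun m hm ↦ ?_
  · refine Nat.pos_of_ne_zero fun h ↦ hn.ne' ?_
    rw [← binaryToZeckendorf_zeckendorfToBinary n, h, binaryToZeckendorf_zero]
  · refine Nat.pos_of_ne_zero fun h ↦ hm.1.ne' ?_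
    rw [← zeckendorfToBinary_binaryToZeckendorf hm.2, h, zeckendorfToBinary_zero]
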